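/- arXiv:1707.06491 — 2 statements merged into one kernel-verified Lean document; each statement's English description precedes it below -/
import Mathlib

section
/- Let P, K1, K2 be n-by-n complex matrices with P^2 = P, and set D_j = i[K_j, P] for j = 1, 2, where [A,B] = AB - BA. Then Tr(P [D_1, D_2]) = Tr(P [K_1, K_2]). In particular, the adiabatic (Berry) curvature i·Tr(P [D_1, D_2]) built from the quasi-adiabatic generators equals the Kubo-type expression i·Tr(P [K_1, K_2]). -/
/-!
For an idempotent `P`, the commutator `⁅K, P⁆` is off-diagonal with respect to `1 = P + (1 - P)`,
so `P ⁅K₁, P⁆ ⁅K₂, P⁆ P = -P K₁ (1 - P) K₂ P`. Under the trace the terms `P K₁ P K₂ P` and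
`P K₂ P K₁ P` of `P ⁅⁅K₁, P⁆, ⁅K₂, P⁆⁆ P` cancel by cyclicity, leaving `-Tr (P ⁅K₁, K₂⁆)`;
the two factors `i` contribute `i² = -1`.
-/

theorem IsIdempotentElem.mul_lie_mul_lie_mul {R : Type*} [Ring R] {P : R}
    (hP : IsIdempotentElem P) (K₁ K₂ : R) :
    P * ⁅K₁, P⁆ * ⁅K₂, P⁆ * P = -(P * K₁ * (1 - P) * K₂ * P) := by
  have h₁ : P * ⁅K₁, P⁆ = -(P * K₁ * (1 - P)) := by
    rw [Ring.lie_def, mul_sub, ← mul_assoc, ← mul_assoc, hP.eq]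
    noncomm_ring
  have h₂ : ⁅K₂, P⁆ * P = (1 - P) * K₂ * P := by
    rw [Ring.lie_def, sub_mul, mul_assoc, hP.eq]
    noncomm_ring
  calc P * ⁅K₁, P⁆ * ⁅K₂, P⁆ * P = (P * ⁅K₁, P⁆) * (⁅K₂, P⁆ * P) := by noncomm_ring
    _ = -(P * K₁ * ((1 - P) * (1 - P)) * K₂ * P) := by rw [h₁, h₂]; noncomm_ring
    _ = -(P * K₁ * (1 - P) * K₂ * P) := by rw [hP.one_sub.eq]

namespace Matrix

variable {n R : Type*} [Fintype n] [CommRing R] {P : Matrix n n R}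

theorem trace_mul_mul_self_of_isIdempotentElem (hP : IsIdempotentElem P) (X : Matrix n n R) :
    trace (P * X * P) = trace (P * X) := by
  rw [trace_mul_comm, ← Matrix.mul_assoc, hP.eq]

variable [DecidableEq n]

theorem trace_mul_mul_one_sub_mul_mul_of_isIdempotentElem (hP : IsIdempotentElem P)
    (K₁ K₂ : Matrix n n R) :
    trace (P * K₁ * (1 - P) * K₂ * P) = trace (P * K₁ * K₂) - trace (P * K₁ * P * K₂) := by
  calc trace (P * K₁ * (1 - P) * K₂ * P) = trace (P * (K₁ * (1 - P) * K₂) * P) := by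
        simp only [Matrix.mul_assoc]
    _ = trace (P * (K₁ * (1 - P) * K₂)) := trace_mul_mul_self_of_isIdempotentElem hP _
    _ = trace (P * K₁ * K₂) - trace (P * K₁ * P * K₂) := by
        simp only [Matrix.mul_sub, Matrix.sub_mul, Matrix.mul_one, Matrix.mul_assoc, trace_sub]

theorem trace_mul_lie_lie_lie_of_isIdempotentElem (hP : IsIdempotentElem P)
    (K₁ K₂ : Matrix n n R) :
    trace (P * ⁅⁅K₁, P⁆, ⁅K₂, P⁆⁆) = -trace (P * ⁅K₁, K₂⁆) := by
  have hswap : trace (P * K₁ * P * K₂) = trace (P * K₂ * P * K₁) := by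
    rw [Matrix.mul_assoc (P * K₁), trace_mul_comm, ← Matrix.mul_assoc]
  calc trace (P * ⁅⁅K₁, P⁆, ⁅K₂, P⁆⁆) = trace (P * ⁅⁅K₁, P⁆, ⁅K₂, P⁆⁆ * P) :=
        (trace_mul_mul_self_of_isIdempotentElem hP _).symm
    _ = trace (P * ⁅K₁, P⁆ * ⁅K₂, P⁆ * P) - trace (P * ⁅K₂, P⁆ * ⁅K₁, P⁆ * P) := by
        simp only [Ring.lie_def ⁅K₁, P⁆, Matrix.mul_sub, Matrix.sub_mul, Matrix.mul_assoc,
          trace_sub]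
    _ = -trace (P * ⁅K₁, K₂⁆) := by
        rw [hP.mul_lie_mul_lie_mul, hP.mul_lie_mul_lie_mul, trace_neg, trace_neg,
          trace_mul_mul_one_sub_mul_mul_of_isIdempotentElem hP,
          trace_mul_mul_one_sub_mul_mul_of_isIdempotentElem hP, hswap, Ring.lie_def,
          Matrix.mul_sub, trace_sub, ← Matrix.mul_assoc, ← Matrix.mul_assoc]
        ring

theorem trace_mul_lie_smul_lie_smul_lie_of_isIdempotentElem (hP : IsIdempotentElem P)
    (c : R) (K₁ K₂ : Matrix n n R) :
    trace (P * ⁅c • ⁅K₁, P⁆, c • ⁅K₂, P⁆⁆) = -(c * c) • trace (P * ⁅K₁, K₂⁆) := by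
  rw [Ring.lie_def (c • _), smul_mul_smul_comm, smul_mul_smul_comm, ← smul_sub, ← Ring.lie_def,
    Matrix.mul_smul, trace_smul, trace_mul_lie_lie_lie_of_isIdempotentElem hP, smul_neg, neg_smul]

end Matrix

/-- For a projection `P` (`P ^ 2 = P`) and matrices `K₁, K₂`, with
`D_j = i[K_j, P]`, one has `Tr(P [D₁, D₂]) = Tr(P [K₁, K₂])`. -/
theorem stmt_0 (n : ℕ) (P K₁ K₂ : Matrix (Fin n) (Fin n) ℂ) (hP : P * P = P)
    (D₁ D₂ : Matrix (Fin n) (Fin n) ℂ)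
    (hD₁ : D₁ = Complex.I • (K₁ * P - P * K₁))
    (hD₂ : D₂ = Complex.I • (K₂ * P - P * K₂)) :
    Matrix.trace (P * (D₁ * D₂ - D₂ * D₁)) =
      Matrix.trace (P * (K₁ * K₂ - K₂ * K₁)) := by
  have h := Matrix.trace_mul_lie_smul_lie_smul_lie_of_isIdempotentElem hP Complex.I K₁ K₂
  simp only [Ring.lie_def] at h
  rw [hD₁, hD₂, h, Complex.I_mul_I, neg_neg, one_smul]
end

section
/- Let H, H' be Hermitian n-by-n complex matrices, let O be any n-by-n complex matrix, and define tau_t^H(X) = exp(itH) X exp(-itH) and tau_t^{H'}(X) = exp(itH') X exp(-itH'). Then for every t >= 0, || tau_t^H(O) - tau_t^{H'}(O) || <= Integral from 0 to t of || [H - H', tau_s^{H'}(O)] || ds, where ||.|| is the operator norm induced by the Euclidean norm on C^n and [A,B] = AB - BA. -/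
/-!
Work in the interaction picture `F s = τ^{-H}_s (τ^{H'}_s O)`. Since `τ^H_s` commutes with the
commutator with `H`, the Heisenberg equation gives `F' s = τ^{-H}_s (-i [H - H', τ^{H'}_s O])`.
For Hermitian `H` the evolution `τ^H_t` is an isometry inverting `τ^{-H}_t`, so the left-hand side
is `‖F t - F 0‖ = ‖∫₀ᵗ F'‖ ≤ ∫₀ᵗ ‖F'‖`, and `‖F' s‖` is the integrand.
-/

open Matrix MeasureTheory
open scoped Matrix.Norms.L2Operator

/-- The Heisenberg evolution `τ_t^H(X) = exp(itH) X exp(-itH)`. -/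
noncomputable def heis {n : ℕ} (H : Matrix (Fin n) (Fin n) ℂ) (t : ℝ)
    (X : Matrix (Fin n) (Fin n) ℂ) : Matrix (Fin n) (Fin n) ℂ :=
  NormedSpace.exp (((t : ℂ) * Complex.I) • H) * X *
    NormedSpace.exp (-(((t : ℂ) * Complex.I) • H))

open NormedSpace
open Complex (I)

section Heisenberg

variable {n : ℕ} {H : Matrix (Fin n) (Fin n) ℂ}

lemma heis_eq_exp_smul (H : Matrix (Fin n) (Fin n) ℂ) (t : ℝ) (X : Matrix (Fin n) (Fin n) ℂ) :
    heis H t X = exp (t • (I • H)) * X * exp (t • -(I • H)) := by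
  rw [heis, ← smul_smul, Complex.coe_smul, smul_neg]

lemma heis_zero_time (H X : Matrix (Fin n) (Fin n) ℂ) : heis H 0 X = X := by
  simp [heis]

lemma heis_sub (H : Matrix (Fin n) (Fin n) ℂ) (t : ℝ) (X Y : Matrix (Fin n) (Fin n) ℂ) :
    heis H t (X - Y) = heis H t X - heis H t Y := by
  simp only [heis, mul_sub, sub_mul]

lemma heis_smul (H : Matrix (Fin n) (Fin n) ℂ) (t : ℝ) (c : ℂ)
    (X : Matrix (Fin n) (Fin n) ℂ) :
    heis H t (c • X) = c • heis H t X := by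
  simp only [heis, mul_smul_comm, smul_mul_assoc]

lemma heis_heis_neg (H : Matrix (Fin n) (Fin n) ℂ) (t : ℝ) (X : Matrix (Fin n) (Fin n) ℂ) :
    heis H t (heis (-H) t X) = X := by
  let +nondep : NormedAlgebra ℚ (Matrix (Fin n) (Fin n) ℂ) := .restrictScalars ℚ ℂ _
  set A := ((t : ℂ) * I) • H
  have hA : exp A * exp (-A) = 1 := by
    rw [← exp_add_of_commute (Commute.refl A).neg_right, add_neg_cancel, exp_zero]
  simp only [heis, smul_neg, neg_neg, ← mul_assoc]
  rw [hA, one_mul, mul_assoc, hA, mul_one]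

lemma heis_commutator_self (H : Matrix (Fin n) (Fin n) ℂ) (t : ℝ)
    (X : Matrix (Fin n) (Fin n) ℂ) :
    heis H t (H * X - X * H) = H * heis H t X - heis H t X * H := by
  have hU : Commute H (exp (((t : ℂ) * I) • H)) := ((Commute.refl H).smul_right _).exp_right
  have hV : Commute H (exp (-(((t : ℂ) * I) • H))) :=
    ((Commute.refl H).smul_right _).neg_right.exp_right
  simp only [heis, mul_sub, sub_mul, ← mul_assoc, hU.eq]
  simp only [mul_assoc, hV.eq]

lemma norm_heis (hH : H.IsHermitian) (t : ℝ) (X : Matrix (Fin n) (Fin n) ℂ) :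
    ‖heis H t X‖ = ‖X‖ := by
  let +nondep : NormedAlgebra ℚ (Matrix (Fin n) (Fin n) ℂ) := .restrictScalars ℚ ℂ _
  have hA : ((t : ℂ) * I) • H ∈ skewAdjoint (Matrix (Fin n) (Fin n) ℂ) :=
    hH.isSelfAdjoint.smul_mem_skewAdjoint (by simp [skewAdjoint.mem_iff])
  rw [heis, mul_assoc, CStarRing.norm_mem_unitary_mul _ (exp_mem_unitary_of_mem_skewAdjoint hA),
    CStarRing.norm_mul_mem_unitary _ (exp_mem_unitary_of_mem_skewAdjoint (neg_mem hA))]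

lemma HasDerivAt.heis {X : ℝ → Matrix (Fin n) (Fin n) ℂ} {X' : Matrix (Fin n) (Fin n) ℂ}
    {s : ℝ} (hX : HasDerivAt X X' s) :
    HasDerivAt (fun s => _root_.heis H s (X s))
      (_root_.heis H s (X' + I • (H * X s - X s * H))) s := by
  have hU := hasDerivAt_exp_smul_const (𝕂 := ℝ) (I • H) s
  have hV := hasDerivAt_exp_smul_const' (𝕂 := ℝ) (-(I • H)) s
  simp_rw [heis_eq_exp_smul]
  refine ((hU.mul hX).mul hV).congr_deriv ?_
  simp only [Pi.mul_apply, smul_sub, mul_add, add_mul, mul_sub, sub_mul, mul_smul_comm,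
    smul_mul_assoc, mul_neg, neg_mul, mul_assoc]
  abel

lemma Continuous.heis {X : ℝ → Matrix (Fin n) (Fin n) ℂ} (hX : Continuous X) :
    Continuous (fun s => _root_.heis H s (X s)) := by
  let +nondep : NormedAlgebra ℚ (Matrix (Fin n) (Fin n) ℂ) := .restrictScalars ℚ ℂ _
  simp only [heis_eq_exp_smul]
  fun_prop

lemma hasDerivAt_heis (H X : Matrix (Fin n) (Fin n) ℂ) (s : ℝ) :
    HasDerivAt (fun s => heis H s X) (I • (H * heis H s X - heis H s X * H)) s := by
  refine (hasDerivAt_const s X).heis.congr_deriv ?_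
  rw [zero_add, heis_smul, heis_commutator_self]

lemma hasDerivAt_heis_neg_heis (H H' O : Matrix (Fin n) (Fin n) ℂ) (s : ℝ) :
    HasDerivAt (fun s => heis (-H) s (heis H' s O))
      (heis (-H) s (-I • ((H - H') * heis H' s O - heis H' s O * (H - H')))) s := by
  refine (hasDerivAt_heis H' O s).heis.congr_deriv ?_
  rw [← smul_add, neg_smul, ← smul_neg]
  congr 2
  noncomm_ring

lemma heis_neg_heis_sub_eq_integral (H H' O : Matrix (Fin n) (Fin n) ℂ) (t : ℝ) :
    heis (-H) t (heis H' t O) - O =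
      ∫ s in (0 : ℝ)..t,
        heis (-H) s (-I • ((H - H') * heis H' s O - heis H' s O * (H - H'))) := by
  have hG : Continuous fun s => heis H' s O := continuous_const.heis
  have hcont : Continuous fun s =>
      heis (-H) s (-I • ((H - H') * heis H' s O - heis H' s O * (H - H'))) :=
    Continuous.heis (by fun_prop)
  rw [intervalIntegral.integral_eq_sub_of_hasDerivAt
    (fun s _ => hasDerivAt_heis_neg_heis H H' O s) (hcont.intervalIntegrable 0 t),
    heis_zero_time, heis_zero_time]

end Heisenberg

theorem stmt_4_general (n : ℕ) (H H' O : Matrix (Fin n) (Fin n) ℂ)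
    (hH : H.IsHermitian) (t : ℝ) (ht : 0 ≤ t) :
    ‖heis H t O - heis H' t O‖ ≤
      ∫ s in (0:ℝ)..t, ‖(H - H') * heis H' s O - heis H' s O * (H - H')‖ := by
  calc ‖heis H t O - heis H' t O‖ = ‖heis H t (O - heis (-H) t (heis H' t O))‖ := by
        rw [heis_sub, heis_heis_neg]
    _ = ‖heis (-H) t (heis H' t O) - O‖ := by rw [norm_heis hH, norm_sub_rev]
    _ = ‖∫ s in (0:ℝ)..t,
          heis (-H) s (-I • ((H - H') * heis H' s O - heis H' s O * (H - H')))‖ := by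
        rw [heis_neg_heis_sub_eq_integral]
    _ ≤ ∫ s in (0:ℝ)..t,
          ‖heis (-H) s (-I • ((H - H') * heis H' s O - heis H' s O * (H - H')))‖ :=
        intervalIntegral.norm_integral_le_integral_norm ht
    _ = ∫ s in (0:ℝ)..t, ‖(H - H') * heis H' s O - heis H' s O * (H - H')‖ := by
        simp only [norm_heis hH.neg, norm_smul, norm_neg, Complex.norm_I, one_mul]

/-- for `t ≥ 0`,
`‖τ_t^H(O) - τ_t^{H'}(O)‖ ≤ ∫₀ᵗ ‖[H - H', τ_s^{H'}(O)]‖ ds`,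
where `‖·‖` is the operator norm induced by the Euclidean norm on `ℂⁿ`. -/
theorem stmt_4 (n : ℕ) (H H' O : Matrix (Fin n) (Fin n) ℂ)
    (hH : H.IsHermitian) (hH' : H'.IsHermitian) (t : ℝ) (ht : 0 ≤ t) :
    ‖heis H t O - heis H' t O‖ ≤
      ∫ s in (0:ℝ)..t, ‖(H - H') * heis H' s O - heis H' s O * (H - H')‖ :=
  stmt_4_general n H H' O hH t ht
end
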